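/- arXiv:1108.0953 — 3 statements merged into one kernel-verified Lean document; each statement's English description precedes it below -/
import Mathlib

section
/- The Clifford twist satisfies the 2-cocycle identity: for all p, q, r ∈ ℕ, ε(p,q)·ε(p XOR q, r) = ε(q,r)·ε(p, q XOR r), where XOR is bitwise exclusive or. Consequently, the product i_p · i_q := ε(p,q) i_{p XOR q} on the free module with basis {i_p : p ∈ ℕ} is associative. -/
/-- Number of 1-bits (popcount) of a natural number. -/
def popCount : ℕ → ℕ
  | 0 => 0
  | (n+1) => (n+1) % 2 + popCount ((n+1) / 2)
decreasing_by omega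

/-- The Clifford twist with parameter `μ`. -/
def cliffordTwist (μ : ℤ) (p q : ℕ) : ℤ :=
  if p = 0 ∧ q = 0 then 1
  else
    (if q % 2 = 1 then
      (if p % 2 = 1 then μ else 1) * (-1) ^ popCount (p / 2)
     else 1) * cliffordTwist μ (p / 2) (q / 2)
termination_by p + q
decreasing_by omega

/-!
Peeling off the lowest bits, `ε(p, q) = λ(p, q) · ε(⌊p/2⌋, ⌊q/2⌋)`, where the factor `λ` sees only
the lowest bits of `p`, `q` and the sign `(-1)^β(⌊p/2⌋)`; this sign is multiplicative under XOR.
Since halving commutes with XOR, the cocycle identity for `ε` splits into the same identity for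
`λ`, an eight-case check on the lowest bits of `p`, `q`, `r`, and the induction hypothesis for
the halved arguments.
-/

lemma popCount_eq_mod_two_add_popCount_div_two (n : ℕ) :
    popCount n = n % 2 + popCount (n / 2) := by
  cases n with
  | zero => simp [popCount]
  | succ m => rw [popCount]

lemma neg_one_pow_popCount_xor (a b : ℕ) :
    (-1 : ℤ) ^ popCount (a ^^^ b) = (-1) ^ popCount a * (-1) ^ popCount b := by
  induction a using Nat.strong_induction_on generalizing b with
  | _ a ih =>
  rcases Nat.eq_zero_or_pos a with rfl | ha
  · simp [popCount]
  · rw [popCount_eq_mod_two_add_popCount_div_two (a ^^^ b),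
      popCount_eq_mod_two_add_popCount_div_two a, popCount_eq_mod_two_add_popCount_div_two b,
      Nat.xor_div_two, Nat.xor_mod_two_eq, pow_add, pow_add, pow_add, ih (a / 2) (by omega)]
    simp only [← neg_one_pow_eq_pow_mod_two, pow_add]
    ring

def cliffordTwistLowBit (μ : ℤ) (p q : ℕ) : ℤ :=
  if q % 2 = 1 then (if p % 2 = 1 then μ else 1) * (-1) ^ popCount (p / 2) else 1

lemma cliffordTwist_eq_lowBit_mul (μ : ℤ) (p q : ℕ) :
    cliffordTwist μ p q = cliffordTwistLowBit μ p q * cliffordTwist μ (p / 2) (q / 2) := by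
  by_cases h : p = 0 ∧ q = 0
  · obtain ⟨rfl, rfl⟩ := h
    simp [cliffordTwistLowBit]
  · rw [cliffordTwist, if_neg h, cliffordTwistLowBit]

lemma cliffordTwistLowBit_cocycle (μ : ℤ) (p q r : ℕ) :
    cliffordTwistLowBit μ p q * cliffordTwistLowBit μ (p ^^^ q) r =
      cliffordTwistLowBit μ q r * cliffordTwistLowBit μ p (q ^^^ r) := by
  simp only [cliffordTwistLowBit, Nat.xor_div_two, neg_one_pow_popCount_xor, Nat.xor_mod_two_eq]
  rcases neg_one_pow_eq_or ℤ (popCount (p / 2)) with hs | hs <;>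
    rcases Nat.mod_two_eq_zero_or_one p with hp | hp <;>
    rcases Nat.mod_two_eq_zero_or_one q with hq | hq <;>
    rcases Nat.mod_two_eq_zero_or_one r with hr | hr <;>
    simp [Nat.add_mod, hs, hp, hq, hr] <;> ring

theorem cliffordTwist_cocycle (μ : ℤ) (p q r : ℕ) :
    cliffordTwist μ p q * cliffordTwist μ (p ^^^ q) r =
      cliffordTwist μ q r * cliffordTwist μ p (q ^^^ r) := by
  by_cases h : p = 0 ∧ q = 0 ∧ r = 0
  · obtain ⟨rfl, rfl, rfl⟩ := h
    simp
  · rw [cliffordTwist_eq_lowBit_mul μ p, cliffordTwist_eq_lowBit_mul μ (p ^^^ q),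
      cliffordTwist_eq_lowBit_mul μ q, cliffordTwist_eq_lowBit_mul μ p (q ^^^ r),
      Nat.xor_div_two, Nat.xor_div_two]
    linear_combination
      cliffordTwist μ (p / 2) (q / 2) * cliffordTwist μ (p / 2 ^^^ q / 2) (r / 2) *
          cliffordTwistLowBit_cocycle μ p q r +
        cliffordTwistLowBit μ q r * cliffordTwistLowBit μ p (q ^^^ r) *
          cliffordTwist_cocycle μ (p / 2) (q / 2) (r / 2)
termination_by p + q + r
decreasing_by omega

theorem stmt2_general (μ : ℤ) :
    (∀ p q r : ℕ,
      cliffordTwist μ p q * cliffordTwist μ (p ^^^ q) r =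
        cliffordTwist μ q r * cliffordTwist μ p (q ^^^ r)) ∧
    (∀ x y z : ℤ × ℕ,
      (fun a b : ℤ × ℕ => (a.1 * b.1 * cliffordTwist μ a.2 b.2, a.2 ^^^ b.2))
        ((fun a b : ℤ × ℕ => (a.1 * b.1 * cliffordTwist μ a.2 b.2, a.2 ^^^ b.2)) x y) z =
      (fun a b : ℤ × ℕ => (a.1 * b.1 * cliffordTwist μ a.2 b.2, a.2 ^^^ b.2)) x
        ((fun a b : ℤ × ℕ => (a.1 * b.1 * cliffordTwist μ a.2 b.2, a.2 ^^^ b.2)) y z)) := by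
  refine ⟨cliffordTwist_cocycle μ, fun x y z => Prod.ext ?_ (Nat.xor_assoc _ _ _)⟩
  linear_combination x.1 * y.1 * z.1 * cliffordTwist_cocycle μ x.2 y.2 z.2

theorem stmt2 (μ : ℤ) (hμ : μ = 1 ∨ μ = -1) :
    (∀ p q r : ℕ,
      cliffordTwist μ p q * cliffordTwist μ (p ^^^ q) r =
        cliffordTwist μ q r * cliffordTwist μ p (q ^^^ r)) ∧
    (∀ x y z : ℤ × ℕ,
      (fun a b : ℤ × ℕ => (a.1 * b.1 * cliffordTwist μ a.2 b.2, a.2 ^^^ b.2))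
        ((fun a b : ℤ × ℕ => (a.1 * b.1 * cliffordTwist μ a.2 b.2, a.2 ^^^ b.2)) x y) z =
      (fun a b : ℤ × ℕ => (a.1 * b.1 * cliffordTwist μ a.2 b.2, a.2 ^^^ b.2)) x
        ((fun a b : ℤ × ℕ => (a.1 * b.1 * cliffordTwist μ a.2 b.2, a.2 ^^^ b.2)) y z)) :=
  stmt2_general μ
end

section
/- For all p, q ∈ ℕ, the Clifford twist satisfies the closed-form formula ε(p,q) = μ^{β(p AND q)} · (-1)^{N(p,q)}, where β denotes popcount, AND is bitwise and, and N(p,q) is the number of pairs (i,j) with i > j such that bit i of p and bit j of q are both set. -/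
open Finset

lemma popCount_eq_mod_two_add (p : ℕ) : popCount p = p % 2 + popCount (p / 2) := by
  cases p <;> rw [popCount]

lemma popCount_eq_length_bitIndices (p : ℕ) : popCount p = p.bitIndices.length := by
  induction p using Nat.strong_induction_on with
  | _ p ih =>
    rcases Nat.eq_zero_or_pos p with rfl | hp
    · rw [popCount, Nat.bitIndices_zero, List.length_nil]
    obtain ⟨k, rfl | rfl⟩ := Nat.even_or_odd' p
    · rw [popCount_eq_mod_two_add, show 2 * k / 2 = k by omega, Nat.bitIndices_two_mul,
        List.length_map, ih k (by omega), Nat.mul_mod_right, zero_add]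
    · rw [popCount_eq_mod_two_add, show (2 * k + 1) / 2 = k by omega,
        Nat.bitIndices_two_mul_add_one, List.length_cons, List.length_map, ih k (by omega)]
      omega

lemma popCount_and (p q : ℕ) :
    popCount (p &&& q) = p % 2 * (q % 2) + popCount (p / 2 &&& q / 2) := by
  rw [popCount_eq_mod_two_add, Nat.and_div_two, Nat.and_mod_two_pow (n := 1)]
  rcases Nat.mod_two_eq_zero_or_one p with hp | hp <;>
    rcases Nat.mod_two_eq_zero_or_one q with hq | hq <;> simp [hp, hq]

def bitPairs (p q : ℕ) : Finset (ℕ × ℕ) :=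
  ((range (p + 1)) ×ˢ (range (q + 1))).filter
    (fun ij => ij.2 < ij.1 ∧ p.testBit ij.1 ∧ q.testBit ij.2)

lemma lt_of_testBit_eq_true {p i : ℕ} (h : p.testBit i = true) : i < p :=
  Nat.lt_two_pow_self.trans_le (Nat.ge_two_pow_of_testBit h)

lemma mem_bitPairs {p q : ℕ} {ij : ℕ × ℕ} :
    ij ∈ bitPairs p q ↔ ij.2 < ij.1 ∧ p.testBit ij.1 ∧ q.testBit ij.2 := by
  simp only [bitPairs, mem_filter, mem_product, mem_range, and_iff_right_iff_imp]
  rintro ⟨-, hi, hj⟩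
  exact ⟨(lt_of_testBit_eq_true hi).trans (by omega), (lt_of_testBit_eq_true hj).trans (by omega)⟩

lemma filter_bitPairs_snd_ne_zero (p q : ℕ) :
    (bitPairs p q).filter (·.2 ≠ 0) =
      (bitPairs (p / 2) (q / 2)).map ((addRightEmbedding 1).prodMap (addRightEmbedding 1)) := by
  ext ⟨i, j⟩
  simp only [mem_filter, mem_bitPairs, mem_map, Function.Embedding.coe_prodMap, Prod.map_apply,
    addRightEmbedding_apply, Prod.exists, Prod.mk.injEq]
  constructor
  · rintro ⟨⟨hji, hi, hj⟩, hj0⟩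
    obtain ⟨i, rfl⟩ : ∃ i', i = i' + 1 := ⟨i - 1, by omega⟩
    obtain ⟨j, rfl⟩ : ∃ j', j = j' + 1 := ⟨j - 1, by omega⟩
    rw [Nat.testBit_succ] at hi hj
    exact ⟨i, j, ⟨by omega, hi, hj⟩, rfl, rfl⟩
  · rintro ⟨i, j, ⟨hji, hi, hj⟩, rfl, rfl⟩
    simp only [Nat.testBit_succ]
    exact ⟨⟨by omega, hi, hj⟩, by omega⟩

lemma filter_bitPairs_snd_eq_zero_of_mod_two_eq_one {p q : ℕ} (hq : q % 2 = 1) :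
    (bitPairs p q).filter (·.2 = 0) =
      (p / 2).bitIndices.toFinset.map
        ((addRightEmbedding 1).trans (Function.Embedding.sectL ℕ 0)) := by
  ext ⟨i, j⟩
  simp only [mem_filter, mem_bitPairs, mem_map, List.mem_toFinset, Nat.mem_bitIndices,
    Function.Embedding.trans_apply, Function.Embedding.sectL_apply, addRightEmbedding_apply,
    Prod.mk.injEq]
  constructor
  · rintro ⟨⟨hji, hi, -⟩, rfl⟩
    obtain ⟨i, rfl⟩ : ∃ i', i = i' + 1 := ⟨i - 1, by omega⟩
    exact ⟨i, by rwa [Nat.testBit_succ] at hi, rfl, rfl⟩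
  · rintro ⟨i, hi, rfl, rfl⟩
    simp [Nat.testBit_succ, Nat.testBit_zero, hq, hi]

lemma card_filter_bitPairs_snd_eq_zero (p q : ℕ) :
    #((bitPairs p q).filter (·.2 = 0)) = q % 2 * popCount (p / 2) := by
  rcases Nat.mod_two_eq_zero_or_one q with hq | hq
  · rw [hq, zero_mul, card_eq_zero, filter_eq_empty_iff]
    rintro ⟨i, j⟩ hij rfl
    simp [mem_bitPairs, Nat.testBit_zero, hq] at hij
  · rw [filter_bitPairs_snd_eq_zero_of_mod_two_eq_one hq, card_map,
      List.toFinset_card_of_nodup Nat.bitIndices_nodup, hq, one_mul,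
      popCount_eq_length_bitIndices]

lemma card_bitPairs (p q : ℕ) :
    #(bitPairs p q) = q % 2 * popCount (p / 2) + #(bitPairs (p / 2) (q / 2)) := by
  rw [← card_filter_add_card_filter_not (fun ij => ij.2 = 0), card_filter_bitPairs_snd_eq_zero,
    filter_bitPairs_snd_ne_zero, card_map]

theorem cliffordTwist_eq (μ : ℤ) (p q : ℕ) :
    cliffordTwist μ p q = μ ^ popCount (p &&& q) * (-1) ^ #(bitPairs p q) := by
  induction p, q using cliffordTwist.induct with
  | case1 p q h =>
    obtain ⟨rfl, rfl⟩ := h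
    simp [cliffordTwist, popCount, bitPairs]
  | case2 p q h ih =>
    rw [cliffordTwist.eq_def, if_neg h, ih, popCount_and p q, card_bitPairs p q, pow_add, pow_add]
    rcases Nat.mod_two_eq_zero_or_one p with hp | hp <;>
      rcases Nat.mod_two_eq_zero_or_one q with hq | hq <;> simp [hp, hq] <;> ring

theorem stmt3_general (μ : ℤ) (p q : ℕ) :
    cliffordTwist μ p q =
      μ ^ popCount (p &&& q) *
        (-1) ^ (((Finset.range (p+1)) ×ˢ (Finset.range (q+1))).filter
          (fun ij => ij.2 < ij.1 ∧ p.testBit ij.1 ∧ q.testBit ij.2)).card :=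
  cliffordTwist_eq μ p q

theorem stmt3 (μ : ℤ) (hμ : μ = 1 ∨ μ = -1) (p q : ℕ) :
    cliffordTwist μ p q =
      μ ^ popCount (p &&& q) *
        (-1) ^ (((Finset.range (p+1)) ×ˢ (Finset.range (q+1))).filter
          (fun ij => ij.2 < ij.1 ∧ p.testBit ij.1 ∧ q.testBit ij.2)).card :=
  stmt3_general μ p q
end

section
/- With μ = -1, the Clifford twist restricted to indices {0,1,2,3} yields the quaternion multiplication signs: the 4×4 table of ε(p,q) for 0 ≤ p,q ≤ 3 equals [[1,1,1,1],[1,-1,1,-1],[1,-1,-1,1],[1,1,-1,-1]], so the span of i_0, i_1, i_2, i_3 with product i_p i_q = ε(p,q) i_{p XOR q} is isomorphic as an ℝ-algebra to the quaternions ℍ. -/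
/-!
Unfolding the recursion for `ε` on indices below 4 gives the table directly. It is also the
multiplication table of the basis `1, i, j, k` of `ℍ = ℍ[ℝ, -1, 0, -1]`: the product of two basis
elements is the basis element indexed by the XOR of their indices, times the sign from the table.
So the coordinate isomorphism of this basis is the required map.
-/

def quaternionSigns : Matrix (Fin 4) (Fin 4) ℤ :=
  !![1, 1, 1, 1; 1, -1, 1, -1; 1, -1, -1, 1; 1, 1, -1, -1]

theorem cliffordTwist_neg_one_fin_four (p q : Fin 4) :
    cliffordTwist (-1) p q = quaternionSigns p q := by
  fin_cases p <;> fin_cases q <;> simp [cliffordTwist, popCount, quaternionSigns]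

theorem Quaternion.basisOneIJK_mul_basisOneIJK (p q : Fin 4) :
    QuaternionAlgebra.basisOneIJK (-1 : ℝ) 0 (-1) p *
        QuaternionAlgebra.basisOneIJK (-1 : ℝ) 0 (-1) q =
      (quaternionSigns p q : ℝ) • QuaternionAlgebra.basisOneIJK (-1 : ℝ) 0 (-1) (p ^^^ q) := by
  fin_cases p <;> fin_cases q <;> ext <;>
    simp [quaternionSigns, QuaternionAlgebra.basisOneIJK, QuaternionAlgebra.equivTuple]

theorem stmt14 :
    (∀ p q : Fin 4, cliffordTwist (-1) p.val q.val =
      (!![1, 1, 1, 1; 1, -1, 1, -1; 1, -1, -1, 1; 1, 1, -1, -1] : Matrix (Fin 4) (Fin 4) ℤ) p q) ∧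
    ∃ f : (Fin 4 → ℝ) ≃ₗ[ℝ] Quaternion ℝ,
      ∀ p q : Fin 4,
        f (Pi.single p 1) * f (Pi.single q 1) =
          (cliffordTwist (-1) p.val q.val : ℝ) •
            f (Pi.single (⟨(p.val ^^^ q.val) % 4, Nat.mod_lt _ (by norm_num)⟩ : Fin 4) 1) := by
  refine ⟨cliffordTwist_neg_one_fin_four,
    (QuaternionAlgebra.basisOneIJK (-1 : ℝ) 0 (-1)).equivFun.symm, fun p q => ?_⟩
  have h := Quaternion.basisOneIJK_mul_basisOneIJK p q
  simp only [← Basis.equivFun_symm_single (QuaternionAlgebra.basisOneIJK (-1 : ℝ) 0 (-1))] at h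
  rw [cliffordTwist_neg_one_fin_four]
  -- `p ^^^ q` on `Fin 4` is `⟨(p.val ^^^ q.val) % 4, _⟩` by definition
  exact h
end
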